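/- Let ψ ∈ 𝒦 with radius R_ψ and extinction probability function q(t) = g(t/ψ(t))/t for t ∈ (0,R_ψ), extended by q(0) = 1. Then q is continuous on [0,R_ψ). In particular lim_{t↓0} q(t) = 1. -/

import Mathlib

/-!
Write `G = ∑ Aₙ Xⁿ` with `Aₙ = lagA b n`. Lagrange inversion, through the residue identity
`[Xᵐ] U^{-(m+1)} (X U)' = δ_{m,0}`, shows that `G` is the formal solution of `G = X ψ(G)`.
All coefficients being nonnegative, induction through this equation bounds the partial sums of
`g(x)` by `s` whenever `x ψ(s) ≤ s`. So `g` and `h(z) = g(z)/z = ∑ A_{n+1} zⁿ` are sums of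
nonnegative series converging on `[0, s/ψ(s)]`, hence continuous there. Finally
`q(t) = h(t/ψ(t)) / ψ(t)` for `t > 0`, and the right-hand side is continuous on `[0, R)` and
equals `A₁ / ψ(0) = 1` at `t = 0`.
-/

open Set Filter Topology

/-- The function defined by the power series with coefficients `b`. -/
noncomputable def psi (b : ℕ → ℝ) (t : ℝ) : ℝ := ∑' n, b n * t ^ n

/-- The mean function of the Khinchin family of `psi b`. -/
noncomputable def mean (b : ℕ → ℝ) (t : ℝ) : ℝ := t * deriv (psi b) t / psi b t

/-- Coefficients of the solution of Lagrange's equation `g(z) = z ψ(g(z))`,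
given by Lagrange's inversion formula. -/
noncomputable def lagA (b : ℕ → ℝ) : ℕ → ℝ := fun n =>
  if n = 0 then 0 else (n : ℝ)⁻¹ * PowerSeries.coeff (n - 1) ((PowerSeries.mk b) ^ n)

/-- The solution `g` of Lagrange's equation with data `ψ`, as a function. -/
noncomputable def lagG (b : ℕ → ℝ) (z : ℝ) : ℝ := ∑' n, lagA b n * z ^ n

open PowerSeries

namespace PowerSeries

open Finset

section Lagrange

variable {R K : Type*} [CommRing R] [Field K]

theorem coeff_subst_eq_sum_range {G : R⟦X⟧} (hG : constantCoeff G = 0) (H : R⟦X⟧) {n N : ℕ}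
    (h : n < N) : coeff n (H.subst G) = ∑ k ∈ range N, coeff k H * coeff n (G ^ k) := by
  rw [coeff_subst' (HasSubst.of_constantCoeff_zero' hG)]
  refine finsum_eq_sum_of_support_subset _ fun k hk => ?_
  by_contra hkN
  have hnk : (n : ℕ∞) < k := by simp at hkN; exact_mod_cast (by omega : n < k)
  have hcoeff := coeff_of_lt_order n (hnk.trans_le (le_order_pow_of_constantCoeff_eq_zero k hG))
  exact hk (by simp [hcoeff])

theorem coeff_mul_subst {G : R⟦X⟧} (hG : constantCoeff G = 0) (W H : R⟦X⟧) (n : ℕ) :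
    coeff n (W * H.subst G) = ∑ k ∈ range (n + 1), coeff k H * coeff n (W * G ^ k) := by
  simp_rw [coeff_mul, mul_sum]
  rw [sum_comm]
  refine sum_congr rfl fun p hp => ?_
  rw [coeff_subst_eq_sum_range hG H (N := n + 1)
    (by have := mem_antidiagonal.mp hp; omega), mul_sum]
  exact sum_congr rfl fun k _ => by ring

theorem exists_eq_X_mul_subst {F : K⟦X⟧} (hF : constantCoeff F ≠ 0) :
    ∃ G : K⟦X⟧, G = X * F.subst G := by
  set P : K⟦X⟧ := X * F⁻¹
  have hP : constantCoeff P = 0 := by simp [P]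
  have hP' : IsUnit (coeff 1 P) := by simpa [P, coeff_succ_X_mul] using hF
  set G := P.substInvOfIsUnit hP'
  have hG : HasSubst G := HasSubst.substInvOfIsUnit P hP'
  have hXG : G * F⁻¹.subst G = X := by
    rw [← subst_substInvOfIsUnit_right P hP hP', subst_mul hG, subst_X hG]
  have hinv : F⁻¹.subst G * F.subst G = 1 := by
    rw [← subst_mul hG, PowerSeries.inv_mul_cancel F hF, ← coe_substAlgHom hG, map_one]
  refine ⟨G, ?_⟩
  rw [← hXG, mul_assoc, hinv, mul_one]

variable [CharZero K]

theorem coeff_inv_pow_mul_derivative_X_mul {U : K⟦X⟧} (hU : constantCoeff U ≠ 0) (m : ℕ) :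
    coeff m (U⁻¹ ^ (m + 1) * d⁄dX K (X * U)) = if m = 0 then 1 else 0 := by
  have hd : d⁄dX K (X * U) = U + X * d⁄dX K U := by
    rw [Derivation.leibniz, derivative_X, smul_eq_mul, smul_eq_mul]; ring
  rcases m with _ | k
  · simp [hd, hU]
  · set V := U⁻¹
    have hVU : V * U = 1 := PowerSeries.inv_mul_cancel U hU
    have hsplit : V ^ (k + 2) * d⁄dX K (X * U) = V ^ (k + 1) + X * (V ^ (k + 2) * d⁄dX K U) := by
      rw [hd]; linear_combination V ^ (k + 1) * hVU
    have hdV : d⁄dX K (V ^ (k + 1)) = -((k + 1 : K⟦X⟧) * (V ^ (k + 2) * d⁄dX K U)) := by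
      rw [Derivation.leibniz_pow, derivative_inv', nsmul_eq_mul, smul_eq_mul]; push_cast; ring
    have hcoeff := coeff_derivative (V ^ (k + 1)) k
    rw [hdV, map_neg, show (k + 1 : K⟦X⟧) = C (k + 1 : K) by simp, coeff_C_mul] at hcoeff
    rw [if_neg k.succ_ne_zero, hsplit, map_add, coeff_succ_X_mul]
    exact mul_right_cancel₀ (Nat.cast_add_one_ne_zero k) (by linear_combination -hcoeff)

theorem coeff_inv_pow_mul_derivative_mul_subst {U : K⟦X⟧} (hU : constantCoeff U ≠ 0)
    (H : K⟦X⟧) (n : ℕ) :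
    coeff n (U⁻¹ ^ (n + 1) * d⁄dX K (X * U) * H.subst (X * U)) = coeff n H := by
  have hpow : ∀ k ≤ n,
      coeff n (U⁻¹ ^ (n + 1) * d⁄dX K (X * U) * (X * U) ^ k) = if k = n then 1 else 0 := by
    intro k hk
    obtain ⟨m, rfl⟩ := Nat.exists_eq_add_of_le hk
    have hUk : U⁻¹ ^ k * U ^ k = 1 := by rw [← mul_pow, PowerSeries.inv_mul_cancel U hU, one_pow]
    have : U⁻¹ ^ (k + m + 1) * d⁄dX K (X * U) * (X * U) ^ k
        = X ^ k * (U⁻¹ ^ (m + 1) * d⁄dX K (X * U)) := by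
      linear_combination (X ^ k * U⁻¹ ^ (m + 1) * d⁄dX K (X * U)) * hUk
    rw [this, coeff_X_pow_mul', if_pos (by omega), Nat.add_sub_cancel_left,
      coeff_inv_pow_mul_derivative_X_mul hU]
    simp
  rw [coeff_mul_subst (by simp), sum_congr rfl fun k hk => by
    rw [hpow k (Nat.lt_succ_iff.mp (mem_range.mp hk))]]
  simp

theorem lagrange_inversion {F G : K⟦X⟧} (hF : constantCoeff F ≠ 0) (hG : G = X * F.subst G)
    (n : ℕ) : (n + 1 : K) * coeff (n + 1) G = coeff n (F ^ (n + 1)) := by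
  set U : K⟦X⟧ := F.subst G
  have hG0 : constantCoeff G = 0 := by rw [hG]; simp
  have hU : constantCoeff U = constantCoeff F := by
    simpa using coeff_subst_eq_sum_range hG0 F (n := 0) zero_lt_one
  have hUn : U⁻¹ ^ (n + 1) * U ^ (n + 1) = 1 := by
    rw [← mul_pow, PowerSeries.inv_mul_cancel U (hU ▸ hF), one_pow]
  rw [← coeff_inv_pow_mul_derivative_mul_subst (hU ▸ hF) (F ^ (n + 1)) n, ← hG,
    subst_pow (HasSubst.of_constantCoeff_zero' hG0), mul_right_comm, hUn, one_mul,
    coeff_derivative, mul_comm]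

end Lagrange

end PowerSeries

section PartialSums

open Finset

variable {R : Type*} [CommSemiring R] [PartialOrder R] [IsOrderedRing R]

theorem PowerSeries.coeff_pow_nonneg {S : R⟦X⟧} (h : ∀ i, 0 ≤ coeff i S) (m j : ℕ) :
    0 ≤ coeff j (S ^ m) := by
  induction m generalizing j with
  | zero => rw [pow_zero, coeff_one]; split_ifs <;> simp
  | succ m ih =>
    rw [pow_succ, coeff_mul]
    exact sum_nonneg fun p _ => mul_nonneg (ih p.1) (h p.2)

theorem Polynomial.sum_range_coeff_mul_pow_le_eval {P : Polynomial R} (hP : ∀ n, 0 ≤ P.coeff n)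
    {x : R} (hx : 0 ≤ x) (N : ℕ) : ∑ n ∈ range N, P.coeff n * x ^ n ≤ P.eval x := by
  rw [P.eval_eq_sum_range' (n := max N (P.natDegree + 1)) (by omega)]
  exact sum_le_sum_of_subset_of_nonneg (range_subset_range.mpr (le_max_left _ _))
    fun n _ _ => mul_nonneg (hP n) (pow_nonneg hx n)

theorem PowerSeries.sum_range_coeff_pow_mul_pow_le {G : R⟦X⟧} (hG : ∀ n, 0 ≤ coeff n G)
    {x : R} (hx : 0 ≤ x) (N m : ℕ) :
    ∑ n ∈ range N, coeff n (G ^ m) * x ^ n ≤ (∑ n ∈ range N, coeff n G * x ^ n) ^ m := by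
  set P := trunc N G
  have hPm : ∀ n < N, coeff n (G ^ m) = (P ^ m).coeff n := fun n hn => by
    rw [← coeff_coe_trunc_of_lt hn, ← trunc_trunc_pow, coeff_coe_trunc_of_lt hn,
      ← Polynomial.coe_pow, Polynomial.coeff_coe]
  have hPm_nonneg : ∀ n, 0 ≤ (P ^ m).coeff n := fun n => by
    rw [← Polynomial.coeff_coe, Polynomial.coe_pow]
    refine coeff_pow_nonneg (fun i => ?_) m n
    rw [Polynomial.coeff_coe, coeff_trunc]; split_ifs <;> simp [hG]
  have hPeval : P.eval x = ∑ n ∈ range N, coeff n G * x ^ n :=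
    eval₂_trunc_eq_sum_range x (RingHom.id R) N G
  calc ∑ n ∈ range N, coeff n (G ^ m) * x ^ n
      = ∑ n ∈ range N, (P ^ m).coeff n * x ^ n :=
        sum_congr rfl fun n hn => by rw [hPm n (mem_range.mp hn)]
    _ ≤ (P ^ m).eval x := Polynomial.sum_range_coeff_mul_pow_le_eval hPm_nonneg hx N
    _ = _ := by rw [Polynomial.eval_pow, hPeval]

theorem sum_range_coeff_mul_pow_le_of_eq_X_mul_subst {b : ℕ → ℝ} {G : ℝ⟦X⟧}
    (hb : ∀ n, 0 ≤ b n) (hG : G = X * (mk b).subst G) (hGnn : ∀ n, 0 ≤ coeff n G)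
    {s x : ℝ} (hs : 0 ≤ s) (hsum : Summable fun n => b n * s ^ n) (hx : 0 ≤ x)
    (hxs : x * psi b s ≤ s) (N : ℕ) : ∑ n ∈ range N, coeff n G * x ^ n ≤ s := by
  have hG0 : constantCoeff G = 0 := by rw [hG]; simp
  induction N with
  | zero => simpa using hs
  | succ N ih =>
    have hterm : ∀ n ∈ range N, coeff (n + 1) G * x ^ (n + 1)
        = x * ∑ m ∈ range N, b m * (coeff n (G ^ m) * x ^ n) := fun n hn => by
      conv_lhs => rw [hG]
      rw [coeff_succ_X_mul, coeff_subst_eq_sum_range hG0 _ (mem_range.mp hn), sum_mul, mul_sum]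
      exact sum_congr rfl fun m _ => by rw [coeff_mk]; ring
    calc ∑ n ∈ range (N + 1), coeff n G * x ^ n
        = x * ∑ m ∈ range N, b m * ∑ n ∈ range N, coeff n (G ^ m) * x ^ n := by
          rw [sum_range_succ', sum_congr rfl hterm, ← mul_sum, sum_comm]
          simp [hG0, mul_sum]
      _ ≤ x * ∑ m ∈ range N, b m * s ^ m := by
          gcongr with m
          · exact hb m
          · exact (sum_range_coeff_pow_mul_pow_le hGnn hx N m).trans (pow_le_pow_left₀
              (sum_nonneg fun n _ => mul_nonneg (hGnn n) (pow_nonneg hx n)) ih m)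
      _ ≤ x * psi b s := by
          gcongr
          exact hsum.sum_le_tsum _ fun n _ => mul_nonneg (hb n) (pow_nonneg hs n)
      _ ≤ s := hxs

end PartialSums

theorem continuousOn_tsum_mul_pow {c : ℕ → ℝ} (hc : ∀ n, 0 ≤ c n) {M : ℝ}
    (hM : Summable fun n => c n * M ^ n) :
    ContinuousOn (fun x => ∑' n, c n * x ^ n) (Icc 0 M) := by
  refine continuousOn_tsum (fun n => by fun_prop) hM fun n x hx => ?_
  rw [Real.norm_eq_abs, abs_of_nonneg (mul_nonneg (hc n) (pow_nonneg hx.1 n))]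
  exact mul_le_mul_of_nonneg_left (pow_le_pow_left₀ hx.1 hx.2 n) (hc n)

theorem summable_succ_mul_pow {c : ℕ → ℝ} {M : ℝ} (h : Summable fun n => c n * M ^ n) :
    Summable fun n => c (n + 1) * M ^ n := by
  rcases eq_or_ne M 0 with rfl | hM
  · exact summable_of_ne_finset_zero (s := {0}) fun n hn => by simp_all
  · refine (((summable_nat_add_iff 1).mpr h).mul_left M⁻¹).congr fun n => ?_
    field_simp
    ring

theorem tsum_mul_pow_zero (c : ℕ → ℝ) : ∑' n, c n * (0 : ℝ) ^ n = c 0 := by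
  rw [tsum_eq_single 0 fun n hn => by simp [hn]]
  simp

theorem continuousOn_Ico_of_forall_Icc {α β : Type*} [LinearOrder α] [TopologicalSpace α]
    [OrderTopology α] [DenselyOrdered α] [TopologicalSpace β] {f : α → β} {a R : α}
    (h : ∀ s ∈ Ioo a R, ContinuousOn f (Icc a s)) : ContinuousOn f (Ico a R) := by
  intro t ht
  obtain ⟨s, hts, hsR⟩ := exists_between ht.2
  refine (h s ⟨ht.1.trans_lt hts, hsR⟩ t ⟨ht.1, hts.le⟩).mono_of_mem_nhdsWithin ?_
  exact mem_of_superset (inter_mem_nhdsWithin _ (Iio_mem_nhds hts))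
    fun x hx => ⟨hx.1.1, hx.2.le⟩

section Psi

variable {b : ℕ → ℝ}

theorem psi_zero : psi b 0 = b 0 := tsum_mul_pow_zero b

theorem le_psi (hb : ∀ n, 0 ≤ b n) {t : ℝ} (ht : 0 ≤ t) (hsum : Summable fun n => b n * t ^ n) :
    b 0 ≤ psi b t := by
  simpa [psi] using hsum.le_tsum 0 fun n _ => mul_nonneg (hb n) (pow_nonneg ht n)

theorem psi_pos (hb : ∀ n, 0 ≤ b n) (hb0 : 0 < b 0) {t : ℝ} (ht : 0 ≤ t)
    (hsum : Summable fun n => b n * t ^ n) : 0 < psi b t :=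
  hb0.trans_le (le_psi hb ht hsum)

end Psi

section LagrangeSeries

variable {b : ℕ → ℝ}

theorem lagA_zero : lagA b 0 = 0 := if_pos rfl

theorem mk_lagA_eq_X_mul_subst (hb0 : b 0 ≠ 0) :
    mk (lagA b) = X * (mk b).subst (mk (lagA b)) := by
  have hF : constantCoeff (mk b) ≠ 0 := by simpa using hb0
  obtain ⟨G, hG⟩ := exists_eq_X_mul_subst hF
  suffices h : mk (lagA b) = G by rw [h]; exact hG
  ext (_ | n)
  · rw [hG]; simp [lagA_zero]
  · rw [coeff_mk, lagA, if_neg n.succ_ne_zero, Nat.add_sub_cancel, ← lagrange_inversion hF hG n]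
    push_cast
    field_simp

theorem lagA_nonneg (hb : ∀ n, 0 ≤ b n) (n : ℕ) : 0 ≤ lagA b n := by
  unfold lagA
  split_ifs
  · exact le_rfl
  · exact mul_nonneg (by positivity) (coeff_pow_nonneg (by simpa using hb) n (n - 1))

theorem lagA_one : lagA b 1 = b 0 := by simp [lagA]

theorem summable_lagA_mul_pow (hb : ∀ n, 0 ≤ b n) (hb0 : b 0 ≠ 0) {s x : ℝ} (hs : 0 ≤ s)
    (hsum : Summable fun n => b n * s ^ n) (hx : 0 ≤ x) (hxs : x * psi b s ≤ s) :
    Summable fun n => lagA b n * x ^ n :=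
  summable_of_sum_range_le (fun n => mul_nonneg (lagA_nonneg hb n) (pow_nonneg hx n)) <| by
    simpa using sum_range_coeff_mul_pow_le_of_eq_X_mul_subst hb (mk_lagA_eq_X_mul_subst hb0)
      (by simpa using lagA_nonneg hb) hs hsum hx hxs

/-- The power series of `lagG b z / z`. -/
noncomputable def lagH (b : ℕ → ℝ) (z : ℝ) : ℝ := ∑' n, lagA b (n + 1) * z ^ n

theorem lagG_eq_mul_lagH {z : ℝ} (h : Summable fun n => lagA b n * z ^ n) :
    lagG b z = z * lagH b z := by
  rw [lagG, h.tsum_eq_zero_add, lagH, ← tsum_mul_left, lagA_zero, zero_mul, zero_add]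
  exact tsum_congr fun n => by ring

theorem lagH_zero : lagH b 0 = b 0 := by rw [lagH, tsum_mul_pow_zero, lagA_one]

theorem continuousOn_lagH (hb : ∀ n, 0 ≤ b n) (hb0 : 0 < b 0) {s : ℝ} (hs : 0 ≤ s)
    (hsum : Summable fun n => b n * s ^ n) : ContinuousOn (lagH b) (Icc 0 (s / psi b s)) := by
  have hψ : 0 < psi b s := psi_pos hb hb0 hs hsum
  exact continuousOn_tsum_mul_pow (fun n => lagA_nonneg hb _) <| summable_succ_mul_pow <|
    summable_lagA_mul_pow hb hb0.ne' hs hsum (by positivity) (div_mul_cancel₀ s hψ.ne').le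

end LagrangeSeries

section Extinction

variable {b : ℕ → ℝ}

theorem lagG_div_eq_lagH_div_psi (hb : ∀ n, 0 ≤ b n) (hb0 : 0 < b 0) {t : ℝ} (ht : 0 < t)
    (hsum : Summable fun n => b n * t ^ n) :
    lagG b (t / psi b t) / t = lagH b (t / psi b t) / psi b t := by
  have hψ : 0 < psi b t := psi_pos hb hb0 ht.le hsum
  rw [lagG_eq_mul_lagH (summable_lagA_mul_pow hb hb0.ne' ht.le hsum (by positivity)
    (div_mul_cancel₀ t hψ.ne').le)]
  field_simp

theorem continuousOn_lagH_div_psi (hb : ∀ n, 0 ≤ b n) (hb0 : 0 < b 0) {R : ℝ}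
    (hconv : ∀ t : ℝ, 0 ≤ t → t < R → Summable fun n => b n * t ^ n) :
    ContinuousOn (fun t => lagH b (t / psi b t) / psi b t) (Ico 0 R) := by
  refine continuousOn_Ico_of_forall_Icc fun s hs => ?_
  have hsum : ∀ t ∈ Icc 0 s, Summable fun n => b n * t ^ n := fun t ht =>
    hconv t ht.1 (ht.2.trans_lt hs.2)
  have hψpos : ∀ t ∈ Icc 0 s, 0 < psi b t := fun t ht => psi_pos hb hb0 ht.1 (hsum t ht)
  have hψ : ContinuousOn (psi b) (Icc 0 s) :=
    continuousOn_tsum_mul_pow hb (hsum s ⟨hs.1.le, le_rfl⟩)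
  have hφ : ContinuousOn (fun t => t / psi b t) (Icc 0 s) :=
    continuousOn_id.div hψ fun t ht => (hψpos t ht).ne'
  -- `t / ψ t` need not be monotone; its maximum on `[0, s]` gives one interval for `lagH`.
  obtain ⟨t', ht', hmax⟩ := isCompact_Icc.exists_isMaxOn (nonempty_Icc.mpr hs.1.le) hφ
  have hmaps : MapsTo (fun t => t / psi b t) (Icc 0 s) (Icc 0 (t' / psi b t')) := fun t ht =>
    ⟨div_nonneg ht.1 (hψpos t ht).le, hmax ht⟩
  exact ((continuousOn_lagH hb hb0 ht'.1 (hsum t' ht')).comp hφ hmaps).div hψ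
    fun t ht => (hψpos t ht).ne'

end Extinction

theorem stmt_15_general
    (b : ℕ → ℝ) (R : ℝ) (hR : 0 < R)
    (hnn : ∀ n, 0 ≤ b n) (hb0 : 0 < b 0)
    (hconv : ∀ t : ℝ, 0 ≤ t → t < R → Summable fun n => b n * t ^ n) :
    ContinuousOn (fun t => if t = 0 then 1 else lagG b (t / psi b t) / t)
      (Set.Ico 0 R) ∧
    Filter.Tendsto (fun t => lagG b (t / psi b t) / t)
      (nhdsWithin 0 (Set.Ioi 0)) (nhds 1) := by
  have hq : EqOn (fun t => if t = 0 then 1 else lagG b (t / psi b t) / t)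
      (fun t => lagH b (t / psi b t) / psi b t) (Ico 0 R) := by
    intro t ht
    rcases ht.1.eq_or_lt with rfl | ht0
    · simp [psi_zero, lagH_zero, hb0.ne']
    · dsimp only
      rw [if_neg ht0.ne']
      exact lagG_div_eq_lagH_div_psi hnn hb0 ht0 (hconv t ht.1 ht.2)
  have hcont := (continuousOn_lagH_div_psi hnn hb0 hconv).congr hq
  refine ⟨hcont, ?_⟩
  have h0 : Tendsto (fun t => if t = 0 then 1 else lagG b (t / psi b t) / t)
      (𝓝[Ico 0 R] 0) (𝓝 1) := by simpa using (hcont 0 ⟨le_rfl, hR⟩).tendsto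
  rw [← nhdsWithin_Ioo_eq_nhdsGT hR]
  refine (h0.mono_left (nhdsWithin_mono 0 Ioo_subset_Ico_self)).congr' ?_
  filter_upwards [self_mem_nhdsWithin] with t ht using if_neg ht.1.ne'

theorem stmt_15
    (b : ℕ → ℝ) (R : ℝ) (hR : 0 < R)
    (hnn : ∀ n, 0 ≤ b n) (hb0 : 0 < b 0)
    (hnc : ∃ n, 1 ≤ n ∧ b n ≠ 0)
    (hconv : ∀ t : ℝ, 0 ≤ t → t < R → Summable fun n => b n * t ^ n) :
    ContinuousOn (fun t => if t = 0 then 1 else lagG b (t / psi b t) / t)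
      (Set.Ico 0 R) ∧
    Filter.Tendsto (fun t => lagG b (t / psi b t) / t)
      (nhdsWithin 0 (Set.Ioi 0)) (nhds 1) :=
  stmt_15_general b R hR hnn hb0 hconv
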